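/- Let L = ℚ(k,l,m,n,p,c) be the field of rational functions over ℚ in the indeterminates k,l,m,n,p,c, and work in L[x,y] with T = x + y + c. Let P = −( n·x + k·y + n·T + (m−l)·x²·y + p·x²·T + m·x·y·T + p·x·T² ) and Q = x·( −(n+k) + (l−m)·x·y − (l+p)·x·T ) (a general member of Żołądek's family CR₇). Then both F = (l·p − m·p)·x² + (l·m − m² + l·p − m·p)·x·y + c·(l·p − m·p)·x + (k·p − m·n) and G = k + l·T·x are algebraic integral curves of P dx + Q dy: F divides P·∂F/∂y − Q·∂F/∂x and G divides P·∂G/∂y − Q·∂G/∂x in L[x,y]. Moreover, the cofactors are proportional to the divergence: there exist scalars a, b ∈ L with P·∂F/∂y − Q·∂F/∂x = −a·F·(∂Q/∂x − ∂P/∂y) and P·∂G/∂y − Q·∂G/∂x = −b·G·(∂Q/∂x − ∂P/∂y). -/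
import Mathlib


open MvPolynomial

/-- The field `L = ℚ(k,l,m,n,p,c)` of rational functions over `ℚ` in six indeterminates,
realized as the fraction field of `ℚ[k,l,m,n,p,c]`. -/
abbrev L7 : Type := FractionRing (MvPolynomial (Fin 6) ℚ)

/-- The `i`-th indeterminate parameter (in the order `k,l,m,n,p,c`), as an element of `L`. -/
noncomputable def prm (i : Fin 6) : L7 :=
  algebraMap (MvPolynomial (Fin 6) ℚ) L7 (X i)

namespace CR7

noncomputable def k : L7 := prm 0
noncomputable def l : L7 := prm 1
noncomputable def m : L7 := prm 2
noncomputable def n : L7 := prm 3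
noncomputable def p : L7 := prm 4
noncomputable def c : L7 := prm 5

noncomputable def x : MvPolynomial (Fin 2) L7 := X 0
noncomputable def y : MvPolynomial (Fin 2) L7 := X 1

/-- `T = x + y + c`. -/
noncomputable def T : MvPolynomial (Fin 2) L7 := x + y + C c

/-- The coefficient polynomial `P` of Żołądek's family `CR₇`. -/
noncomputable def P : MvPolynomial (Fin 2) L7 :=
  -(C n * x + C k * y + C n * T + (C m - C l) * x^2 * y + C p * x^2 * T
    + C m * x * y * T + C p * x * T^2)

/-- The coefficient polynomial `Q` of Żołądek's family `CR₇`. -/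
noncomputable def Q : MvPolynomial (Fin 2) L7 :=
  x * (-(C n + C k) + (C l - C m) * x * y - (C l + C p) * x * T)

/-- The new integral conic for `CR₇`. -/
noncomputable def F : MvPolynomial (Fin 2) L7 :=
  (C l * C p - C m * C p) * x^2 + (C l * C m - C m^2 + C l * C p - C m * C p) * x * y
    + C c * (C l * C p - C m * C p) * x + (C k * C p - C m * C n)

/-- Żołądek's integral conic `G = k + l·T·x` for `CR₇`. -/
noncomputable def G : MvPolynomial (Fin 2) L7 := C k + C l * T * x


lemma hD : (2*l - m : L7) ≠ 0 := by
  have h : (2 * X 1 - X 2 : MvPolynomial (Fin 6) ℚ) ≠ 0 := by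
    intro h
    have := congrArg (eval (fun i => if i = 2 then (1:ℚ) else 0)) h
    simp at this
  have : (2*l - m : L7) = algebraMap (MvPolynomial (Fin 6) ℚ) L7 (2 * X 1 - X 2) := by
    simp [l, m, prm, map_sub, map_mul, map_ofNat]
  rw [this]
  exact fun hc => h (IsFractionRing.injective (MvPolynomial (Fin 6) ℚ) L7 (by simpa using hc))

lemma pdF0 : pderiv 0 F = (C l * C p - C m * C p) * (2*x) +
    (C l * C m - C m^2 + C l * C p - C m * C p) * y + C c * (C l * C p - C m * C p) := by
  simp [F, x, y, pderiv_X_self, pderiv_X_of_ne]; ring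

lemma pdF1 : pderiv 1 F = (C l * C m - C m^2 + C l * C p - C m * C p) * x := by
  simp [F, x, y, pderiv_X_self, pderiv_X_of_ne]

lemma pdG0 : pderiv 0 G = C l * (x + y + C c) + C l * x := by
  simp [G, T, x, y, pderiv_X_self, pderiv_X_of_ne]; ring

lemma pdG1 : pderiv 1 G = C l * x := by
  simp [G, T, x, y, pderiv_X_self, pderiv_X_of_ne]; ring

lemma pdQ0 : pderiv 0 Q = -(2:MvPolynomial (Fin 2) L7)*C p*x*y - 3*C p*x^2 - 2*C p*C c*x - C n
    - 2*C m*x*y - 3*C l*x^2 - 2*C l*C c*x - C k := by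
  simp [Q, T, x, y, pderiv_X_self, pderiv_X_of_ne]; ring

lemma pdP1 : pderiv 1 P = -(2:MvPolynomial (Fin 2) L7)*C p*x*y - 3*C p*x^2 - 2*C p*C c*x - C n
    - 2*C m*x*y - 2*C m*x^2 - C m*C c*x + C l*x^2 - C k := by
  simp [P, T, x, y, pderiv_X_self, pderiv_X_of_ne]; ring

lemma keyF : P * pderiv 1 F - Q * pderiv 0 F
    = -(C ((l-m)/(2*l-m)) * F * (pderiv 0 Q - pderiv 1 P)) := by
  have hc : (2*l-m) * ((l-m)/(2*l-m)) = l - m := mul_div_cancel₀ _ hD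
  apply mul_left_cancel₀ (a := (C (2*l-m) : MvPolynomial (Fin 2) L7)) (by simpa using (C_injective (Fin 2) L7).ne hD)
  have : C (2*l-m) * -(C ((l-m)/(2*l-m)) * F * (pderiv 0 Q - pderiv 1 P))
      = -(C (l-m) * F * (pderiv 0 Q - pderiv 1 P)) := by
    rw [show (C (2*l-m) : MvPolynomial (Fin 2) L7) * -(C ((l-m)/(2*l-m)) * F * (pderiv 0 Q - pderiv 1 P)) = -((C (2*l-m) * C ((l-m)/(2*l-m))) * F * (pderiv 0 Q - pderiv 1 P)) by ring, ← C_mul, hc]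
  rw [this, pdF0, pdF1, pdQ0, pdP1, P, Q, F, T]
  simp only [map_sub, map_mul, map_ofNat, map_add]
  ring

lemma keyG : P * pderiv 1 G - Q * pderiv 0 G
    = -(C (l/(2*l-m)) * G * (pderiv 0 Q - pderiv 1 P)) := by
  have hc : (2*l-m) * (l/(2*l-m)) = l := mul_div_cancel₀ _ hD
  apply mul_left_cancel₀ (a := (C (2*l-m) : MvPolynomial (Fin 2) L7)) (by simpa using (C_injective (Fin 2) L7).ne hD)
  have : C (2*l-m) * -(C (l/(2*l-m)) * G * (pderiv 0 Q - pderiv 1 P))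
      = -(C l * G * (pderiv 0 Q - pderiv 1 P)) := by
    rw [show (C (2*l-m) : MvPolynomial (Fin 2) L7) * -(C (l/(2*l-m)) * G * (pderiv 0 Q - pderiv 1 P)) = -((C (2*l-m) * C (l/(2*l-m))) * G * (pderiv 0 Q - pderiv 1 P)) by ring, ← C_mul, hc]
  rw [this, pdG0, pdG1, pdQ0, pdP1, P, Q, G, T]
  simp only [map_sub, map_mul, map_ofNat, map_add]
  ring


/-- **Both conics `F` and `G` are algebraic integral curves of the general member of
Żołądek's family `CR₇`, and their cofactors are proportional to the divergence
`Q_x − P_y`.** -/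
theorem conics_are_integral_curves_with_proportional_cofactors :
    (F ∣ P * pderiv 1 F - Q * pderiv 0 F) ∧
    (G ∣ P * pderiv 1 G - Q * pderiv 0 G) ∧
    (∃ a : L7, P * pderiv 1 F - Q * pderiv 0 F
      = -(C a * F * (pderiv 0 Q - pderiv 1 P))) ∧
    (∃ b : L7, P * pderiv 1 G - Q * pderiv 0 G
      = -(C b * G * (pderiv 0 Q - pderiv 1 P))) := by
  exact ⟨⟨-(C ((l-m)/(2*l-m)) * (pderiv 0 Q - pderiv 1 P)), by rw [keyF]; ring⟩,
   ⟨-(C (l/(2*l-m)) * (pderiv 0 Q - pderiv 1 P)), by rw [keyG]; ring⟩,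
   ⟨(l-m)/(2*l-m), keyF⟩, ⟨l/(2*l-m), keyG⟩⟩

end CR7
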